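/- Negative gradient of the smoothed negative log-posterior is affine plus a bounded term: for a probability measure g on [-M,M] and U_g(φ) = (1/2)(y - Xφ)ᵀΣ^{-1}(y - Xφ) - Σ_{j=1}^p log(N_τ*g)(φ_j) with Σ = σ²Id - τ²XXᵀ ≻ 0, Tweedie's formula gives ∇U_g(φ) = (XᵀΣ^{-1}X + τ^{-2}Id)φ - XᵀΣ^{-1}y - τ^{-2}θ_g(φ), where θ_g(φ) applies entrywise the posterior mean θ_g(φ_j) = E_g[θ | θ + τZ = φ_j] ∈ [-M, M]. Consequently ∇U_g is Lipschitz with constant ‖XᵀΣ^{-1}X‖_op + τ^{-2}(1 + M²/τ²), uniformly over all priors g on [-M, M]. -/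

import Mathlib

open MeasureTheory Matrix Real

/-- Density at `x` of the centered Gaussian with standard deviation `τ`. -/
noncomputable def gaussDen (τ x : ℝ) : ℝ :=
  (1 / (τ * Real.sqrt (2 * Real.pi))) * Real.exp (-x ^ 2 / (2 * τ ^ 2))

/-- Posterior mean `θ_g(φ) = E_g[θ | θ + τZ = φ]`. -/
noncomputable def postMean (g : Measure ℝ) (τ φ : ℝ) : ℝ :=
  (∫ θ, θ * gaussDen τ (φ - θ) ∂g) / (∫ θ, gaussDen τ (φ - θ) ∂g)

/-- The residual covariance `Σ = σ²Id - τ²XXᵀ`. -/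
noncomputable def SigM (n p : ℕ) (X : Matrix (Fin n) (Fin p) ℝ) (σ τ : ℝ) :
    Matrix (Fin n) (Fin n) ℝ :=
  σ ^ 2 • (1 : Matrix (Fin n) (Fin n) ℝ) - τ ^ 2 • (X * Xᵀ)

/-- The smoothed negative log-posterior
`U_g(φ) = (1/2)(y - Xφ)ᵀΣ⁻¹(y - Xφ) - ∑ⱼ log(N_τ*g)(φⱼ)`. -/
noncomputable def Ug (n p : ℕ) (X : Matrix (Fin n) (Fin p) ℝ) (σ τ : ℝ) (y : Fin n → ℝ)
    (g : Measure ℝ) (φ : Fin p → ℝ) : ℝ :=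
  (1 / 2) * ((y - X *ᵥ φ) ⬝ᵥ ((SigM n p X σ τ)⁻¹ *ᵥ (y - X *ᵥ φ)))
    - ∑ j, Real.log (∫ θ, gaussDen τ (φ j - θ) ∂g)

/-- The `j`-th component of `∇U_g(φ)` given by Tweedie's formula:
`((XᵀΣ⁻¹X + τ⁻²Id)φ - XᵀΣ⁻¹y - τ⁻²θ_g(φ))ⱼ`. -/
noncomputable def gradUg (n p : ℕ) (X : Matrix (Fin n) (Fin p) ℝ) (σ τ : ℝ) (y : Fin n → ℝ)
    (g : Measure ℝ) (φ : Fin p → ℝ) (j : Fin p) : ℝ :=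
  ((Xᵀ * (SigM n p X σ τ)⁻¹ * X) *ᵥ φ) j + φ j / τ ^ 2
    - ((Xᵀ * (SigM n p X σ τ)⁻¹) *ᵥ y) j - postMean g τ (φ j) / τ ^ 2

/-!
Write `Nₖ(x) = ∫ θᵏ N_τ(x - θ) dg(θ)`. Since `g` has bounded support, one may differentiate
under the integral sign: `Nₖ' = (Nₖ₊₁ - x Nₖ) / τ²`. For `k = 0` this is Tweedie's formula
`(log N₀)' = (θ_g - x) / τ²` with `θ_g = N₁ / N₀`, which yields the gradient of `U_g`; and
`θ_g' = (N₂ N₀ - N₁²) / (τ² N₀²)` is the posterior variance over `τ²`, of size at most `M² / τ²`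
because `|Nₖ| ≤ Mᵏ N₀`. The gradient is `XᵀΣ⁻¹X φ + (φ - θ_g(φ)) / τ²` up to a constant, so
the triangle inequality gives the Lipschitz bound.
-/

lemma gaussDen_pos {τ : ℝ} (hτ : 0 < τ) (x : ℝ) : 0 < gaussDen τ x := by
  unfold gaussDen
  positivity

lemma gaussDen_le_gaussDen_zero {τ : ℝ} (hτ : 0 < τ) (x : ℝ) : gaussDen τ x ≤ gaussDen τ 0 := by
  unfold gaussDen
  refine mul_le_mul_of_nonneg_left (Real.exp_le_exp.2 ?_) (by positivity)
  rw [zero_pow two_ne_zero, neg_zero, zero_div]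
  exact div_nonpos_of_nonpos_of_nonneg (neg_nonpos.2 (sq_nonneg x)) (by positivity)

lemma continuous_gaussDen (τ : ℝ) : Continuous (gaussDen τ) := by
  unfold gaussDen
  fun_prop

lemma hasDerivAt_gaussDen (τ x : ℝ) :
    HasDerivAt (gaussDen τ) (-(x / τ ^ 2) * gaussDen τ x) x := by
  have hexponent : HasDerivAt (fun x : ℝ => -x ^ 2 / (2 * τ ^ 2)) (-(x / τ ^ 2)) x := by
    refine ((hasDerivAt_pow 2 x).fun_neg.div_const (2 * τ ^ 2)).congr_deriv ?_
    by_cases hτ : τ = 0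
    · simp [hτ]
    · field_simp
      ring
  exact (hexponent.exp.const_mul _).congr_deriv (by unfold gaussDen; ring)

noncomputable def gaussMoment (g : Measure ℝ) (τ : ℝ) (k : ℕ) (x : ℝ) : ℝ :=
  ∫ θ, θ ^ k * gaussDen τ (x - θ) ∂g

lemma gaussMoment_zero (g : Measure ℝ) (τ x : ℝ) :
    gaussMoment g τ 0 x = ∫ θ, gaussDen τ (x - θ) ∂g := by
  simp only [gaussMoment, pow_zero, one_mul]

lemma postMean_eq_gaussMoment (g : Measure ℝ) (τ x : ℝ) :
    postMean g τ x = gaussMoment g τ 1 x / gaussMoment g τ 0 x := by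
  rw [gaussMoment_zero, gaussMoment]
  simp only [postMean, pow_one]

section Moments

variable {g : Measure ℝ} [IsFiniteMeasure g] {τ M : ℝ}

lemma integrable_pow_mul_gaussDen (hτ : 0 < τ) (hg : ∀ᵐ θ ∂g, |θ| ≤ M) (k : ℕ) (x : ℝ) :
    Integrable (fun θ => θ ^ k * gaussDen τ (x - θ)) g := by
  refine Integrable.mono' (integrable_const (M ^ k * gaussDen τ 0)) ?_ ?_
  · exact ((continuous_pow k).mul ((continuous_gaussDen τ).comp
      (continuous_const.sub continuous_id))).aestronglyMeasurable
  · filter_upwards [hg] with θ hθ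
    rw [norm_mul, norm_pow, Real.norm_eq_abs, Real.norm_of_nonneg (gaussDen_pos hτ _).le]
    exact mul_le_mul (pow_le_pow_left₀ (abs_nonneg θ) hθ k) (gaussDen_le_gaussDen_zero hτ _)
      (gaussDen_pos hτ _).le (pow_nonneg ((abs_nonneg θ).trans hθ) k)

lemma hasDerivAt_gaussMoment (hτ : 0 < τ) (hg : ∀ᵐ θ ∂g, |θ| ≤ M) (k : ℕ) (x : ℝ) :
    HasDerivAt (gaussMoment g τ k)
      ((gaussMoment g τ (k + 1) x - x * gaussMoment g τ k x) / τ ^ 2) x := by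
  set F' : ℝ → ℝ → ℝ := fun y θ => θ ^ k * (-((y - θ) / τ ^ 2) * gaussDen τ (y - θ))
  have hF' : ∀ θ y, HasDerivAt (fun y => θ ^ k * gaussDen τ (y - θ)) (F' y θ) y := fun θ y =>
    (((hasDerivAt_gaussDen τ (y - θ)).comp y ((hasDerivAt_id y).sub_const θ)).const_mul
      (θ ^ k)).congr_deriv (by simp only [F', mul_one])
  have hbound : ∀ᵐ θ ∂g, ∀ y ∈ Metric.ball x 1,
      ‖F' y θ‖ ≤ M ^ k * ((|x| + 1 + M) / τ ^ 2 * gaussDen τ 0) := by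
    filter_upwards [hg] with θ hθ y hy
    rw [Metric.mem_ball, Real.dist_eq] at hy
    have hM : 0 ≤ M := (abs_nonneg θ).trans hθ
    have hyθ : |y - θ| / τ ^ 2 ≤ (|x| + 1 + M) / τ ^ 2 := by
      gcongr
      linarith [abs_sub y θ, abs_sub_abs_le_abs_sub y x]
    rw [norm_mul, norm_mul, norm_neg, norm_div, norm_pow, Real.norm_eq_abs, Real.norm_eq_abs,
      Real.norm_of_nonneg (sq_nonneg τ), Real.norm_of_nonneg (gaussDen_pos hτ _).le]
    exact mul_le_mul (pow_le_pow_left₀ (abs_nonneg θ) hθ k)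
      (mul_le_mul hyθ (gaussDen_le_gaussDen_zero hτ _) (gaussDen_pos hτ _).le
        ((by positivity : 0 ≤ |y - θ| / τ ^ 2).trans hyθ))
      (mul_nonneg (by positivity) (gaussDen_pos hτ _).le) (pow_nonneg hM k)
  have hmeas : ∀ y, AEStronglyMeasurable (fun θ => θ ^ k * gaussDen τ (y - θ)) g := fun y =>
    (integrable_pow_mul_gaussDen hτ hg k y).aestronglyMeasurable
  have hF'meas : AEStronglyMeasurable (F' x) g := by
    refine Continuous.aestronglyMeasurable ?_
    have := continuous_gaussDen τ
    fun_prop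
  have hderiv := (hasDerivAt_integral_of_dominated_loc_of_deriv_le (Metric.ball_mem_nhds x one_pos)
    (Filter.Eventually.of_forall hmeas) (integrable_pow_mul_gaussDen hτ hg k x) hF'meas hbound
    (integrable_const _) (Filter.Eventually.of_forall fun θ y _ => hF' θ y)).2
  have hF'_eq : F' x = fun θ =>
      (θ ^ (k + 1) * gaussDen τ (x - θ) - x * (θ ^ k * gaussDen τ (x - θ))) / τ ^ 2 := by
    funext θ
    ring
  rwa [hF'_eq, integral_div, integral_sub (integrable_pow_mul_gaussDen hτ hg (k + 1) x)
    ((integrable_pow_mul_gaussDen hτ hg k x).const_mul x), integral_const_mul] at hderiv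

lemma gaussMoment_zero_pos [NeZero g] (hτ : 0 < τ) (hg : ∀ᵐ θ ∂g, |θ| ≤ M) (x : ℝ) :
    0 < gaussMoment g τ 0 x := by
  have hint := integrable_pow_mul_gaussDen hτ hg 0 x
  rw [gaussMoment, integral_pos_iff_support_of_nonneg (fun θ => by simpa using
    (gaussDen_pos hτ (x - θ)).le) hint]
  have hsupp : Function.support (fun θ => θ ^ 0 * gaussDen τ (x - θ)) = Set.univ :=
    Function.support_eq_univ fun θ => by simpa using (gaussDen_pos hτ (x - θ)).ne'
  rw [hsupp]
  exact Measure.measure_univ_pos.2 (NeZero.ne g)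

lemma abs_gaussMoment_le (hτ : 0 < τ) (hg : ∀ᵐ θ ∂g, |θ| ≤ M) (k : ℕ) (x : ℝ) :
    |gaussMoment g τ k x| ≤ M ^ k * gaussMoment g τ 0 x := by
  rw [← Real.norm_eq_abs, gaussMoment, gaussMoment, ← integral_const_mul]
  refine norm_integral_le_of_norm_le ((integrable_pow_mul_gaussDen hτ hg 0 x).const_mul _) ?_
  filter_upwards [hg] with θ hθ
  rw [norm_mul, norm_pow, Real.norm_eq_abs, Real.norm_of_nonneg (gaussDen_pos hτ _).le, pow_zero,
    one_mul]
  exact mul_le_mul_of_nonneg_right (pow_le_pow_left₀ (abs_nonneg θ) hθ k) (gaussDen_pos hτ _).le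

/-- Tweedie's formula. -/
lemma hasDerivAt_log_integral_gaussDen [NeZero g] (hτ : 0 < τ) (hg : ∀ᵐ θ ∂g, |θ| ≤ M) (x : ℝ) :
    HasDerivAt (fun x => Real.log (∫ θ, gaussDen τ (x - θ) ∂g))
      ((postMean g τ x - x) / τ ^ 2) x := by
  have hD := gaussMoment_zero_pos hτ hg x
  have h := (hasDerivAt_gaussMoment hτ hg 0 x).log hD.ne'
  simp only [gaussMoment_zero] at h hD
  refine h.congr_deriv ?_
  rw [postMean_eq_gaussMoment, gaussMoment_zero, zero_add]
  field_simp

lemma hasDerivAt_postMean [NeZero g] (hτ : 0 < τ) (hg : ∀ᵐ θ ∂g, |θ| ≤ M) (x : ℝ) :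
    HasDerivAt (postMean g τ)
      ((gaussMoment g τ 2 x * gaussMoment g τ 0 x - gaussMoment g τ 1 x ^ 2)
        / (τ ^ 2 * gaussMoment g τ 0 x ^ 2)) x := by
  have hD := gaussMoment_zero_pos hτ hg x
  have h := (hasDerivAt_gaussMoment hτ hg 1 x).div (hasDerivAt_gaussMoment hτ hg 0 x) hD.ne'
  rw [show postMean g τ = fun x => gaussMoment g τ 1 x / gaussMoment g τ 0 x from
    funext (postMean_eq_gaussMoment g τ)]
  refine h.congr_deriv ?_
  field_simp
  ring

lemma abs_postMean_sub_le [NeZero g] (hτ : 0 < τ) (hg : ∀ᵐ θ ∂g, |θ| ≤ M) (a b : ℝ) :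
    |postMean g τ a - postMean g τ b| ≤ M ^ 2 / τ ^ 2 * |a - b| := by
  have hderiv_le : ∀ x, |(gaussMoment g τ 2 x * gaussMoment g τ 0 x - gaussMoment g τ 1 x ^ 2)
      / (τ ^ 2 * gaussMoment g τ 0 x ^ 2)| ≤ M ^ 2 / τ ^ 2 := by
    intro x
    have hD := gaussMoment_zero_pos hτ hg x
    have hE := abs_le.1 (abs_gaussMoment_le hτ hg 2 x)
    have hN := abs_le.1 (abs_gaussMoment_le hτ hg 1 x)
    have hE_nonneg : 0 ≤ gaussMoment g τ 2 x :=
      integral_nonneg fun θ => mul_nonneg (sq_nonneg θ) (gaussDen_pos hτ _).le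
    have hden : 0 < τ ^ 2 * gaussMoment g τ 0 x ^ 2 := by positivity
    have hvar : |gaussMoment g τ 2 x * gaussMoment g τ 0 x - gaussMoment g τ 1 x ^ 2|
        ≤ M ^ 2 * gaussMoment g τ 0 x ^ 2 := by
      rw [abs_le]
      constructor <;> nlinarith [sq_nonneg (gaussMoment g τ 1 x)]
    rw [abs_div, abs_of_pos hden, div_le_div_iff₀ hden (by positivity)]
    nlinarith [sq_nonneg τ]
  simpa only [Real.norm_eq_abs] using convex_univ.norm_image_sub_le_of_norm_hasDerivWithin_le
    (fun x _ => (hasDerivAt_postMean hτ hg x).hasDerivWithinAt) (fun x _ => hderiv_le x)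
    (Set.mem_univ b) (Set.mem_univ a)

end Moments

section VectorCalculus

variable {ι κ : Type*} [Fintype ι] {u v : ℝ → ι → ℝ} {u' v' : ι → ℝ} {s : ℝ}

lemma HasDerivAt.dotProduct (hu : HasDerivAt u u' s) (hv : HasDerivAt v v' s) :
    HasDerivAt (fun t => u t ⬝ᵥ v t) (u' ⬝ᵥ v s + u s ⬝ᵥ v') s := by
  unfold _root_.dotProduct
  rw [← Finset.sum_add_distrib]
  exact HasDerivAt.fun_sum fun i _ => (hasDerivAt_pi.1 hu i).mul (hasDerivAt_pi.1 hv i)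

lemma HasDerivAt.mulVec [Fintype κ] (A : Matrix κ ι ℝ) (hu : HasDerivAt u u' s) :
    HasDerivAt (fun t => A *ᵥ u t) (A *ᵥ u') s :=
  hasDerivAt_pi.2 fun k => by
    simpa only [Matrix.mulVec, zero_dotProduct, zero_add] using
      (hasDerivAt_const s (A k)).dotProduct hu

lemma HasDerivAt.dotProduct_mulVec_self {A : Matrix ι ι ℝ} (hA : A.IsSymm)
    (hu : HasDerivAt u u' s) :
    HasDerivAt (fun t => u t ⬝ᵥ (A *ᵥ u t)) (2 * (u' ⬝ᵥ (A *ᵥ u s))) s := by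
  refine (hu.dotProduct (hu.mulVec A)).congr_deriv ?_
  rw [dotProduct_mulVec (u s), ← mulVec_transpose, hA.eq, dotProduct_comm (A *ᵥ u s), two_mul]

lemma hasDerivAt_sum_comp_update [DecidableEq ι] {f : ℝ → ℝ} {f' : ℝ} (φ : ι → ℝ) (j : ι)
    (hf : HasDerivAt f f' (φ j)) :
    HasDerivAt (fun s => ∑ k, f (Function.update φ j s k)) f' (φ j) := by
  have hsum : ∀ s, ∑ k, f (Function.update φ j s k) = f s + ∑ k ∈ Finset.univ \ {j}, f (φ k) :=
    fun s => by
      simp only [Function.apply_update (fun _ => f)]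
      exact Finset.sum_update_of_mem (Finset.mem_univ j) _ _
  simp only [hsum]
  exact hf.add_const _

end VectorCalculus

lemma isSymm_SigM (n p : ℕ) (X : Matrix (Fin n) (Fin p) ℝ) (σ τ : ℝ) :
    (SigM n p X σ τ).IsSymm :=
  (isSymm_one.smul _).sub (IsSymm.smul (by simp [IsSymm, transpose_mul]) _)

lemma gradUg_eq (n p : ℕ) (X : Matrix (Fin n) (Fin p) ℝ) (σ τ : ℝ) (y : Fin n → ℝ)
    (g : Measure ℝ) (φ : Fin p → ℝ) (j : Fin p) :
    gradUg n p X σ τ y g φ j = -(Xᵀ *ᵥ ((SigM n p X σ τ)⁻¹ *ᵥ (y - X *ᵥ φ))) j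
      + (φ j - postMean g τ (φ j)) / τ ^ 2 := by
  simp only [gradUg, ← mulVec_mulVec, mulVec_sub, Pi.sub_apply]
  ring

lemma hasDerivAt_Ug_update {n p : ℕ} (X : Matrix (Fin n) (Fin p) ℝ) (σ : ℝ) {τ M : ℝ}
    (hτ : 0 < τ) (y : Fin n → ℝ) (g : Measure ℝ) [IsFiniteMeasure g] [NeZero g]
    (hg : ∀ᵐ θ ∂g, |θ| ≤ M) (φ : Fin p → ℝ) (j : Fin p) :
    HasDerivAt (fun s => Ug n p X σ τ y g (Function.update φ j s))
      (gradUg n p X σ τ y g φ j) (φ j) := by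
  have hres : HasDerivAt (fun s => y - X *ᵥ Function.update φ j s) (-X.col j) (φ j) := by
    simpa only [mulVec_single_one] using ((hasDerivAt_update φ j (φ j)).mulVec X).const_sub y
  have hquad := (hres.dotProduct_mulVec_self (isSymm_SigM n p X σ τ).inv).const_mul (1 / 2 : ℝ)
  have hlog := hasDerivAt_sum_comp_update φ j (hasDerivAt_log_integral_gaussDen hτ hg (φ j))
  refine (hquad.sub hlog).congr_deriv ?_
  have hcol : ∀ w, X.col j ⬝ᵥ w = (Xᵀ *ᵥ w) j := fun w => rfl
  rw [Function.update_eq_self, gradUg_eq, neg_dotProduct, hcol]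
  ring

section EuclideanNorm

variable {ι : Type*} [Fintype ι]

lemma sqrt_sum_sq_eq_norm_toLp (w : ι → ℝ) :
    Real.sqrt (∑ j, w j ^ 2) = ‖WithLp.toLp 2 w‖ := by
  simp [EuclideanSpace.norm_eq, Real.norm_eq_abs, sq_abs]

lemma norm_toLp_le_of_abs_le {a b : ι → ℝ} {c : ℝ} (hc : 0 ≤ c) (h : ∀ j, |a j| ≤ c * |b j|) :
    ‖WithLp.toLp 2 a‖ ≤ c * ‖WithLp.toLp 2 b‖ := by
  refine (sq_le_sq₀ (norm_nonneg _) (by positivity)).1 ?_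
  rw [mul_pow, EuclideanSpace.real_norm_sq_eq, EuclideanSpace.real_norm_sq_eq, Finset.mul_sum]
  refine Finset.sum_le_sum fun j _ => ?_
  simpa only [PiLp.toLp_apply, sq_abs, mul_pow] using pow_le_pow_left₀ (abs_nonneg _) (h j) 2

end EuclideanNorm

lemma gradUg_sub_gradUg (n p : ℕ) (X : Matrix (Fin n) (Fin p) ℝ) (σ τ : ℝ) (y : Fin n → ℝ)
    (g : Measure ℝ) (φ φ' : Fin p → ℝ) :
    (fun j => gradUg n p X σ τ y g φ j - gradUg n p X σ τ y g φ' j)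
      = (Xᵀ * (SigM n p X σ τ)⁻¹ * X) *ᵥ (φ - φ')
        + (τ ^ 2)⁻¹ • ((φ - φ') - fun j => postMean g τ (φ j) - postMean g τ (φ' j)) := by
  funext j
  simp only [gradUg, mulVec_sub, Pi.add_apply, Pi.sub_apply, Pi.smul_apply, smul_eq_mul]
  ring

lemma gradUg_lipschitz {n p : ℕ} (X : Matrix (Fin n) (Fin p) ℝ) (σ : ℝ) {τ M : ℝ} (hτ : 0 < τ)
    (y : Fin n → ℝ) (g : Measure ℝ) [IsFiniteMeasure g] [NeZero g] (hg : ∀ᵐ θ ∂g, |θ| ≤ M)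
    (φ φ' : Fin p → ℝ) :
    Real.sqrt (∑ j, (gradUg n p X σ τ y g φ j - gradUg n p X σ τ y g φ' j) ^ 2) ≤
      (‖Matrix.toEuclideanCLM (𝕜 := ℝ) (Xᵀ * (SigM n p X σ τ)⁻¹ * X)‖
          + (1 + M ^ 2 / τ ^ 2) / τ ^ 2) *
        Real.sqrt (∑ j, (φ j - φ' j) ^ 2) := by
  set B := Xᵀ * (SigM n p X σ τ)⁻¹ * X
  set q : Fin p → ℝ := fun j => postMean g τ (φ j) - postMean g τ (φ' j)
  have hB : ‖WithLp.toLp 2 (B *ᵥ (φ - φ'))‖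
      ≤ ‖toEuclideanCLM (𝕜 := ℝ) B‖ * ‖WithLp.toLp 2 (φ - φ')‖ := by
    rw [← toEuclideanCLM_toLp]
    exact ContinuousLinearMap.le_opNorm _ _
  have hq : ‖WithLp.toLp 2 q‖ ≤ M ^ 2 / τ ^ 2 * ‖WithLp.toLp 2 (φ - φ')‖ :=
    norm_toLp_le_of_abs_le (by positivity) fun j => abs_postMean_sub_le hτ hg _ _
  simp only [sqrt_sum_sq_eq_norm_toLp]
  rw [gradUg_sub_gradUg, show (fun j => φ j - φ' j) = φ - φ' from rfl]
  calc ‖WithLp.toLp 2 (B *ᵥ (φ - φ') + (τ ^ 2)⁻¹ • ((φ - φ') - q))‖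
      ≤ ‖WithLp.toLp 2 (B *ᵥ (φ - φ'))‖
        + (τ ^ 2)⁻¹ * (‖WithLp.toLp 2 (φ - φ')‖ + ‖WithLp.toLp 2 q‖) := by
        rw [WithLp.toLp_add, WithLp.toLp_smul, WithLp.toLp_sub]
        refine (norm_add_le _ _).trans (add_le_add_right ?_ _)
        rw [norm_smul, Real.norm_of_nonneg (by positivity)]
        exact mul_le_mul_of_nonneg_left (norm_sub_le _ _) (by positivity)
    _ ≤ ‖toEuclideanCLM (𝕜 := ℝ) B‖ * ‖WithLp.toLp 2 (φ - φ')‖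
        + (τ ^ 2)⁻¹ * (‖WithLp.toLp 2 (φ - φ')‖ + M ^ 2 / τ ^ 2 * ‖WithLp.toLp 2 (φ - φ')‖) := by
        gcongr
    _ = _ := by ring

lemma ae_abs_le_of_measure_Icc_eq_one {g : Measure ℝ} [IsProbabilityMeasure g] {M : ℝ}
    (hg : g (Set.Icc (-M) M) = 1) : ∀ᵐ θ ∂g, |θ| ≤ M := by
  have hIcc : ∀ᵐ θ ∂g, θ ∈ Set.Icc (-M) M :=
    (ae_mem_iff_measure_eq measurableSet_Icc.nullMeasurableSet).2 (by rw [hg, measure_univ])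
  filter_upwards [hIcc] with θ hθ using abs_le.2 hθ

theorem stmt19_general (n p : ℕ) (X : Matrix (Fin n) (Fin p) ℝ) (σ τ M : ℝ)
    (hτ : 0 < τ) (y : Fin n → ℝ)
    (g : Measure ℝ) [IsProbabilityMeasure g] (hg : g (Set.Icc (-M) M) = 1) :
    (∀ (φ : Fin p → ℝ) (j : Fin p),
      HasDerivAt (fun s => Ug n p X σ τ y g (Function.update φ j s))
        (gradUg n p X σ τ y g φ j) (φ j)) ∧
    (∀ φ φ' : Fin p → ℝ,
      Real.sqrt (∑ j, (gradUg n p X σ τ y g φ j - gradUg n p X σ τ y g φ' j) ^ 2) ≤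
        (‖Matrix.toEuclideanCLM (𝕜 := ℝ) (Xᵀ * (SigM n p X σ τ)⁻¹ * X)‖
            + (1 + M ^ 2 / τ ^ 2) / τ ^ 2) *
          Real.sqrt (∑ j, (φ j - φ' j) ^ 2)) := by
  have hsupp := ae_abs_le_of_measure_Icc_eq_one hg
  exact ⟨hasDerivAt_Ug_update X σ hτ y g hsupp, gradUg_lipschitz X σ hτ y g hsupp⟩

theorem stmt19 (n p : ℕ) (X : Matrix (Fin n) (Fin p) ℝ) (σ τ M : ℝ)
    (hσ : 0 < σ) (hτ : 0 < τ) (hM : 0 < M)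
    (hpos : (SigM n p X σ τ).PosDef) (y : Fin n → ℝ)
    (g : Measure ℝ) [IsProbabilityMeasure g] (hg : g (Set.Icc (-M) M) = 1) :
    (∀ (φ : Fin p → ℝ) (j : Fin p),
      HasDerivAt (fun s => Ug n p X σ τ y g (Function.update φ j s))
        (gradUg n p X σ τ y g φ j) (φ j)) ∧
    (∀ φ φ' : Fin p → ℝ,
      Real.sqrt (∑ j, (gradUg n p X σ τ y g φ j - gradUg n p X σ τ y g φ' j) ^ 2) ≤
        (‖Matrix.toEuclideanCLM (𝕜 := ℝ) (Xᵀ * (SigM n p X σ τ)⁻¹ * X)‖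
            + (1 + M ^ 2 / τ ^ 2) / τ ^ 2) *
          Real.sqrt (∑ j, (φ j - φ' j) ^ 2)) :=
  stmt19_general n p X σ τ M hτ y g hg
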